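/- arXiv:2206.13292 — 3 statements merged into one kernel-verified Lean document; each statement's English description precedes it below -/
import Mathlib

section
/- Let G ⊂ ℝ^N be a measurable set of finite measure, let (ρ_j) be continuous functions on [0,∞) converging to the identity uniformly on compact subsets of [0,∞), satisfying |ρ_j(ξ)| ≤ Kξ for all ξ ≥ 1 and all j for some K > 0, and let (w_j) ⊂ L¹(G) be nonnegative with w_j ⇀ w weakly in L¹(G). Then ρ_j(w_j) ⇀ w weakly in L¹(G). -/
open MeasureTheory Filter Topology ENNReal NNReal

variable {α : Type*} [MeasurableSpace α] {μ : Measure α}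

/-- Absolute continuity of the integral of a nonnegative integrable function. -/
lemma my_abscont {w : α → ℝ} (hw : Integrable w μ) (hnn : ∀ᵐ x ∂μ, 0 ≤ w x)
    {ε : ℝ} (hε : 0 < ε) :
    ∃ δ > (0:ℝ), ∀ A : Set α, μ A < ENNReal.ofReal δ → ∫ x in A, w x ∂μ ≤ ε := by
  have hfin : ∫⁻ x, ENNReal.ofReal (w x) ∂μ ≠ ⊤ := by
    have h2 := hw.hasFiniteIntegral
    rw [HasFiniteIntegral] at h2
    exact (lt_of_le_of_lt (lintegral_mono fun x => Real.ofReal_le_enorm (w x)) h2).ne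
  obtain ⟨δ, hδ0, hδ⟩ := exists_pos_setLIntegral_lt_of_measure_lt hfin
    (ENNReal.ofReal_pos.mpr hε).ne'
  obtain ⟨r, _, hr0, hrδ⟩ := ENNReal.lt_iff_exists_real_btwn.mp hδ0
  refine ⟨r, ENNReal.ofReal_pos.mp hr0, fun A hA => ?_⟩
  have heq : ∫ x in A, w x ∂μ = (∫⁻ x in A, ENNReal.ofReal (w x) ∂μ).toReal := by
    rw [integral_eq_lintegral_of_nonneg_ae (ae_restrict_of_ae hnn)
      hw.aestronglyMeasurable.restrict]
  rw [heq]
  exact ENNReal.toReal_le_of_le_ofReal hε.le (hδ A (hA.trans hrδ)).le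

/-- `|∫_A w - ∫_B w| ≤ ∫_{A Δ B} w` for nonnegative integrable `w`. -/
lemma my_symmdiff_est {w : α → ℝ} (hw : Integrable w μ) (hnn : ∀ᵐ x ∂μ, 0 ≤ w x)
    {A B : Set α} (hA : MeasurableSet A) (hB : MeasurableSet B) :
    |∫ x in A, w x ∂μ - ∫ x in B, w x ∂μ| ≤ ∫ x in (A \ B) ∪ (B \ A), w x ∂μ := by
  have hnnset : ∀ s : Set α, 0 ≤ ∫ x in s, w x ∂μ := fun s =>
    integral_nonneg_of_ae (ae_restrict_of_ae hnn)
  have hsplit : ∀ {s t : Set α}, MeasurableSet s → MeasurableSet t →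
      ∫ x in s, w x ∂μ = ∫ x in s ∩ t, w x ∂μ + ∫ x in s \ t, w x ∂μ := by
    intro s t hs ht
    rw [← setIntegral_union (Set.disjoint_sdiff_right.mono_left Set.inter_subset_right)
      (hs.diff ht) hw.integrableOn hw.integrableOn, Set.inter_union_diff]
  have e1 := hsplit (s := A) (t := B) hA hB
  have e2 := hsplit (s := B) (t := A) hB hA
  rw [e1, e2, Set.inter_comm B A]
  have h1 := hnnset (A \ B); have h2 := hnnset (B \ A)
  have hu : ∫ x in (A \ B) ∪ (B \ A), w x ∂μ
      = ∫ x in A \ B, w x ∂μ + ∫ x in B \ A, w x ∂μ :=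
    setIntegral_union disjoint_sdiff_sdiff (hB.diff hA) hw.integrableOn hw.integrableOn
  rw [hu]
  rw [abs_le]; constructor <;> [linarith; linarith]

/-- An a.e. `{0,1}`-valued `L¹` function is a.e. equal to an indicator of a measurable set. -/
lemma my_repr {f : Lp ℝ 1 μ} (hf : ∀ᵐ x ∂μ, (f : α → ℝ) x = 0 ∨ (f : α → ℝ) x = 1) :
    ∃ A : Set α, MeasurableSet A ∧ (f : α → ℝ) =ᵐ[μ] A.indicator (fun _ => 1) := by
  set g := (Lp.aestronglyMeasurable f).mk _ with hg
  have hgm : StronglyMeasurable g := (Lp.aestronglyMeasurable f).stronglyMeasurable_mk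
  have hfg : (f : α → ℝ) =ᵐ[μ] g := (Lp.aestronglyMeasurable f).ae_eq_mk
  refine ⟨{x | g x = 1}, hgm.measurable (measurableSet_singleton 1), ?_⟩
  filter_upwards [hf, hfg] with x hx hx2
  by_cases h1 : g x = 1
  · simp only [Set.indicator_of_mem, Set.mem_setOf_eq, h1, hx2]
  · have h0 : (f : α → ℝ) x = 0 := by
      rcases hx with h | h
      · exact h
      · exact absurd (hx2 ▸ h) h1
    simp only [h0, Set.indicator_of_notMem, Set.mem_setOf_eq, h1, not_false_iff]

/-- For indicator representatives, the measure of the symmetric difference equals the L¹ dist. -/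
lemma my_symmdiff_meas [IsFiniteMeasure μ] {f h : Lp ℝ 1 μ} {A B : Set α}
    (hA : MeasurableSet A) (hB : MeasurableSet B)
    (hfA : (f : α → ℝ) =ᵐ[μ] A.indicator (fun _ => 1))
    (hhB : (h : α → ℝ) =ᵐ[μ] B.indicator (fun _ => 1)) :
    μ ((A \ B) ∪ (B \ A)) = ENNReal.ofReal (dist f h) := by
  have hpt : (fun x => (‖(f : α → ℝ) x - (h : α → ℝ) x‖₊ : ℝ≥0∞))
      =ᵐ[μ] ((A \ B) ∪ (B \ A)).indicator (fun _ => (1 : ℝ≥0∞)) := by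
    filter_upwards [hfA, hhB] with x hfx hhx
    rw [hfx, hhx]
    by_cases hxA : x ∈ A <;> by_cases hxB : x ∈ B <;>
      simp [Set.indicator_apply, hxA, hxB]
  have hmeas : μ ((A \ B) ∪ (B \ A)) = ∫⁻ x, ‖(f : α → ℝ) x - (h : α → ℝ) x‖₊ ∂μ := by
    rw [lintegral_congr_ae hpt, lintegral_indicator ((hA.diff hB).union (hB.diff hA))]
    simp
  have hsn : eLpNorm ((f : α → ℝ) - (h : α → ℝ)) 1 μ
      = ∫⁻ x, ‖(f : α → ℝ) x - (h : α → ℝ) x‖₊ ∂μ := by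
    rw [eLpNorm_one_eq_lintegral_enorm]; rfl
  have hcongr : eLpNorm ((f : α → ℝ) - (h : α → ℝ)) 1 μ = eLpNorm (⇑(f - h)) 1 μ :=
    eLpNorm_congr_ae (Lp.coeFn_sub f h).symm
  rw [hmeas, ← hsn, hcongr, dist_eq_norm, Lp.norm_def,
    ENNReal.ofReal_toReal (Lp.eLpNorm_ne_top _)]

set_option synthInstance.maxHeartbeats 1000000 in
/-- The set of a.e. `{0,1}`-valued functions is closed in `L¹`. -/
lemma my_S_closed : IsClosed {f : Lp ℝ 1 μ | ∀ᵐ x ∂μ, (f : α → ℝ) x = 0 ∨ (f : α → ℝ) x = 1} := by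
  haveI : Fact ((1:ℝ≥0∞) ≤ 1) := ⟨le_rfl⟩
  refine IsSeqClosed.isClosed ?_
  intro fs f hfs hlim
  have htm : TendstoInMeasure μ (fun n => (fs n : α → ℝ)) atTop f :=
    tendstoInMeasure_of_tendsto_Lp hlim
  obtain ⟨ns, -, hae⟩ := htm.exists_seq_tendsto_ae
  have hall : ∀ᵐ x ∂μ, ∀ i : ℕ, (fs (ns i) : α → ℝ) x = 0 ∨ (fs (ns i) : α → ℝ) x = 1 :=
    ae_all_iff.mpr fun i => hfs (ns i)
  filter_upwards [hall, hae] with x hx htend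
  have hcl : IsClosed ({0, 1} : Set ℝ) := (Set.toFinite ({0,1} : Set ℝ)).isClosed
  have hmem : (f : α → ℝ) x ∈ ({0, 1} : Set ℝ) :=
    hcl.mem_of_tendsto htend (Eventually.of_forall fun i => by
      rcases hx i with h | h <;> simp [h])
  simpa using hmem

lemma my_g_eq {w : α → ℝ} {f : α → ℝ} {A : Set α} (hA : MeasurableSet A)
    (hae : f =ᵐ[μ] A.indicator fun _ => 1) :
    ∫ x, f x * w x ∂μ = ∫ x in A, w x ∂μ := by
  rw [← integral_indicator hA]
  refine integral_congr_ae ?_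
  filter_upwards [hae] with x hx
  rw [hx]; by_cases h : x ∈ A <;> simp [Set.indicator_apply, h]

set_option maxHeartbeats 1000000 in
set_option synthInstance.maxHeartbeats 1000000 in
/-- Vitali–Hahn–Saks style uniform absolute continuity for a sequence of nonnegative
integrable functions whose set integrals all converge. -/
lemma my_vhs [IsFiniteMeasure μ]
    (w : ℕ → α → ℝ) (hwint : ∀ j, Integrable (w j) μ)
    (hwnn : ∀ j, ∀ᵐ x ∂μ, 0 ≤ w j x)
    (hconv : ∀ A : Set α, MeasurableSet A →
      ∃ L, Tendsto (fun j => ∫ x in A, w j x ∂μ) atTop (𝓝 L)) :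
    ∀ ε > (0:ℝ), ∃ δ > (0:ℝ), ∀ j, ∀ A : Set α, MeasurableSet A →
      μ A < ENNReal.ofReal δ → ∫ x in A, w j x ∂μ ≤ ε := by
  intro ε hε
  haveI : Fact ((1:ℝ≥0∞) ≤ 1) := ⟨le_rfl⟩
  classical
  set ε' := ε / 3 with hε'def
  have hε' : 0 < ε' := by positivity
  set S : Set (Lp ℝ 1 μ) := {f | ∀ᵐ x ∂μ, (f : α → ℝ) x = 0 ∨ (f : α → ℝ) x = 1} with hSdef
  haveI : CompleteSpace S := (my_S_closed (μ := μ)).completeSpace_coe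
  haveI : Nonempty S := ⟨⟨0, by filter_upwards [Lp.coeFn_zero ℝ 1 μ] with x hx; left; exact hx⟩⟩
  let T : S → Set α := fun f => Classical.choose (my_repr f.2)
  have hTmeas : ∀ f : S, MeasurableSet (T f) := fun f => (Classical.choose_spec (my_repr f.2)).1
  have hTae : ∀ f : S, ((f : Lp ℝ 1 μ) : α → ℝ) =ᵐ[μ] (T f).indicator (fun _ => 1) :=
    fun f => (Classical.choose_spec (my_repr f.2)).2
  let g : ℕ → S → ℝ := fun j f => ∫ x in T f, w j x ∂μ
  have hgcont : ∀ j, Continuous (g j) := by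
    intro j
    rw [Metric.continuous_iff]
    intro f εc hεc
    obtain ⟨δc, hδc0, hδc⟩ := my_abscont (hwint j) (hwnn j) (half_pos hεc)
    refine ⟨δc, hδc0, fun h hdist => ?_⟩
    have hmeq := my_symmdiff_meas (hTmeas h) (hTmeas f) (hTae h) (hTae f)
    have hlt : μ ((T h \ T f) ∪ (T f \ T h)) < ENNReal.ofReal δc := by
      rw [hmeq]
      rw [Subtype.dist_eq] at hdist
      exact (ENNReal.ofReal_lt_ofReal_iff hδc0).mpr hdist
    calc dist (g j h) (g j f) = |g j h - g j f| := Real.dist_eq _ _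
      _ ≤ ∫ x in (T h \ T f) ∪ (T f \ T h), w j x ∂μ :=
          my_symmdiff_est (hwint j) (hwnn j) (hTmeas h) (hTmeas f)
      _ ≤ εc / 2 := hδc _ hlt
      _ < εc := half_lt_self hεc
  have hgC : ∀ f : S, ∃ n, ∀ j, n ≤ j → ∀ k, n ≤ k → |g j f - g k f| ≤ ε' := by
    intro f
    obtain ⟨L, hL⟩ := hconv (T f) (hTmeas f)
    have hc : CauchySeq fun j => g j f := hL.cauchySeq
    obtain ⟨n, hn⟩ := Metric.cauchySeq_iff'.mp hc (ε'/2) (half_pos hε')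
    refine ⟨n, fun j hj k hk => ?_⟩
    have h1 := hn j hj; have h2 := hn k hk
    rw [Real.dist_eq] at h1 h2
    calc |g j f - g k f| ≤ |g j f - g n f| + |g n f - g k f| := abs_sub_le _ _ _
      _ ≤ ε'/2 + ε'/2 := by
          rw [abs_sub_comm (g n f)]; exact add_le_add h1.le h2.le
      _ = ε' := by ring
  let F : ℕ → Set S := fun n => ⋂ (j : ℕ) (k : ℕ) (_ : n ≤ j) (_ : n ≤ k),
    {f : S | |g j f - g k f| ≤ ε'}
  have hFclosed : ∀ n, IsClosed (F n) :=
    fun n => isClosed_iInter fun j => isClosed_iInter fun k => isClosed_iInter fun _ =>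
      isClosed_iInter fun _ => isClosed_le (((hgcont j).sub (hgcont k)).abs) continuous_const
  have hFcover : (⋃ n, F n) = Set.univ := by
    rw [Set.eq_univ_iff_forall]
    intro f
    obtain ⟨n, hn⟩ := hgC f
    refine Set.mem_iUnion.mpr ⟨n, ?_⟩
    simp only [F, Set.mem_iInter]
    intro j k hj hk
    exact hn j hj k hk
  obtain ⟨n₀, hn₀⟩ := nonempty_interior_of_iUnion_of_closed hFclosed hFcover
  obtain ⟨f₀, hf₀⟩ := hn₀
  obtain ⟨r, hr0, hball⟩ := Metric.mem_nhds_iff.mp (mem_interior_iff_mem_nhds.mp hf₀)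
  have hFmem : ∀ f : S, f ∈ F n₀ → ∀ j k, n₀ ≤ j → n₀ ≤ k → |g j f - g k f| ≤ ε' := by
    intro f hf j k hj hk
    simp only [F, Set.mem_iInter] at hf
    exact hf j k hj hk
  have hfin : ∀ n : ℕ, ∃ δ > (0:ℝ), ∀ j, j < n → ∀ A : Set α,
      μ A < ENNReal.ofReal δ → ∫ x in A, w j x ∂μ ≤ ε' := by
    intro n
    induction n with
    | zero => exact ⟨1, one_pos, fun j hj => absurd hj (Nat.not_lt_zero j)⟩
    | succ n ih =>
      obtain ⟨δ₁, hδ₁, h1⟩ := ih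
      obtain ⟨δ₂, hδ₂, h2⟩ := my_abscont (hwint n) (hwnn n) hε'
      refine ⟨min δ₁ δ₂, lt_min hδ₁ hδ₂, fun j hj A hA => ?_⟩
      rcases Nat.lt_succ_iff_lt_or_eq.mp hj with h | h
      · exact h1 j h A (hA.trans_le (ENNReal.ofReal_le_ofReal (min_le_left _ _)))
      · subst h; exact h2 A (hA.trans_le (ENNReal.ofReal_le_ofReal (min_le_right _ _)))
  obtain ⟨δ₀, hδ₀, hδfin⟩ := hfin (n₀ + 1)
  set A₀ := T f₀ with hA₀
  refine ⟨min δ₀ r, lt_min hδ₀ hr0, fun j A hAmeas hAlt => ?_⟩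
  by_cases hjn : j < n₀ + 1
  · refine (hδfin j hjn A (hAlt.trans_le (ENNReal.ofReal_le_ofReal (min_le_left _ _)))).trans ?_
    rw [hε'def]; linarith
  have hjn' : n₀ ≤ j := by omega
  have hu_meas := (hTmeas f₀).union hAmeas
  have hv_meas := (hTmeas f₀).diff hAmeas
  let u : Lp ℝ 1 μ := indicatorConstLp 1 hu_meas (measure_ne_top μ _) (1:ℝ)
  let v : Lp ℝ 1 μ := indicatorConstLp 1 hv_meas (measure_ne_top μ _) (1:ℝ)
  have hcu : (u : α → ℝ) =ᵐ[μ] (A₀ ∪ A).indicator (fun _ => 1) := indicatorConstLp_coeFn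
  have hcv : (v : α → ℝ) =ᵐ[μ] (A₀ \ A).indicator (fun _ => 1) := indicatorConstLp_coeFn
  have huS : u ∈ S := by
    filter_upwards [hcu] with x hx
    rw [hx]; by_cases hm : x ∈ A₀ ∪ A <;> simp [Set.indicator_apply, hm]
  have hvS : v ∈ S := by
    filter_upwards [hcv] with x hx
    rw [hx]; by_cases hm : x ∈ A₀ \ A <;> simp [Set.indicator_apply, hm]
  let uS : S := ⟨u, huS⟩
  let vS : S := ⟨v, hvS⟩
  have hdistu : dist uS f₀ < r := by
    rw [Subtype.dist_eq]
    have hmeq := my_symmdiff_meas hu_meas (hTmeas f₀) hcu (hTae f₀)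
    have hsub : (((A₀ ∪ A) \ A₀) ∪ (A₀ \ (A₀ ∪ A))) ⊆ A := by
      intro x hx
      rcases hx with hx | hx
      · rcases hx.1 with h | h
        · exact absurd h hx.2
        · exact h
      · exact absurd (Set.mem_union_left A hx.1) hx.2
    have hlt : ENNReal.ofReal (dist u (f₀ : Lp ℝ 1 μ)) < ENNReal.ofReal r := by
      rw [← hmeq]
      exact lt_of_le_of_lt (measure_mono hsub)
        (lt_of_lt_of_le hAlt (ENNReal.ofReal_le_ofReal (min_le_right _ _)))
    exact (ENNReal.ofReal_lt_ofReal_iff_of_nonneg dist_nonneg).mp hlt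
  have hdistv : dist vS f₀ < r := by
    rw [Subtype.dist_eq]
    have hmeq := my_symmdiff_meas hv_meas (hTmeas f₀) hcv (hTae f₀)
    have hsub : (((A₀ \ A) \ A₀) ∪ (A₀ \ (A₀ \ A))) ⊆ A := by
      intro x hx
      rcases hx with hx | hx
      · exact absurd hx.1.1 hx.2
      · by_contra hxA
        exact hx.2 ⟨hx.1, hxA⟩
    have hlt : ENNReal.ofReal (dist v (f₀ : Lp ℝ 1 μ)) < ENNReal.ofReal r := by
      rw [← hmeq]
      exact lt_of_le_of_lt (measure_mono hsub)
        (lt_of_lt_of_le hAlt (ENNReal.ofReal_le_ofReal (min_le_right _ _)))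
    exact (ENNReal.ofReal_lt_ofReal_iff_of_nonneg dist_nonneg).mp hlt
  have huF : uS ∈ F n₀ := hball (Metric.mem_ball.mpr hdistu)
  have hvF : vS ∈ F n₀ := hball (Metric.mem_ball.mpr hdistv)
  have hgu : ∀ j', g j' uS = ∫ x in A₀ ∪ A, w j' x ∂μ := by
    intro j'
    show ∫ x in T uS, w j' x ∂μ = _
    rw [← my_g_eq (hTmeas uS) (hTae uS), my_g_eq hu_meas hcu]
  have hgv : ∀ j', g j' vS = ∫ x in A₀ \ A, w j' x ∂μ := by
    intro j'
    show ∫ x in T vS, w j' x ∂μ = _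
    rw [← my_g_eq (hTmeas vS) (hTae vS), my_g_eq hv_meas hcv]
  have hset : (A₀ ∪ A) \ (A₀ \ A) = A := by
    ext x; simp only [Set.mem_diff, Set.mem_union, not_and, not_not]; tauto
  have key : ∀ j', ∫ x in A, w j' x ∂μ = g j' uS - g j' vS := by
    intro j'
    rw [hgu, hgv, ← integral_diff hv_meas (hwint j').integrableOn
        (Set.diff_subset.trans Set.subset_union_left), hset]
  have h1 := hFmem uS huF j n₀ hjn' le_rfl
  have h2 := hFmem vS hvF j n₀ hjn' le_rfl
  have h3 : ∫ x in A, w n₀ x ∂μ ≤ ε' :=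
    hδfin n₀ (Nat.lt_succ_self n₀) A (hAlt.trans_le (ENNReal.ofReal_le_ofReal (min_le_left _ _)))
  have hj_eq := key j
  have hn_eq := key n₀
  have hb1 := abs_le.mp h1
  have hb2 := abs_le.mp h2
  have hfinal : ∫ x in A, w j x ∂μ ≤ 3 * ε' := by
    rw [hj_eq]
    rw [hn_eq] at h3
    linarith [hb1.1, hb1.2, hb2.1, hb2.2]
  rw [hε'def] at hfinal
  linarith

set_option maxHeartbeats 2000000 in
set_option synthInstance.maxHeartbeats 1000000 in
/-- Weak L¹ convergence of ρ_j(w_j) given locally uniform convergence ρ_j → id,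
a linear growth bound, and weak L¹ convergence w_j ⇀ w on a finite-measure set G ⊂ ℝ^N. -/
theorem rho_weak_L1_convergence
    (N : ℕ) (G : Set (EuclideanSpace ℝ (Fin N)))
    (hGmeas : MeasurableSet G) (hGfin : volume G < ⊤)
    (ρ : ℕ → ℝ → ℝ) (hρcont : ∀ j, ContinuousOn (ρ j) (Set.Ici 0))
    (hρconv : ∀ M > (0:ℝ), ∀ ε > (0:ℝ), ∃ J : ℕ, ∀ j ≥ J, ∀ ξ ∈ Set.Icc (0:ℝ) M, |ρ j ξ - ξ| ≤ ε)
    (K : ℝ) (hK : 0 < K) (hρK : ∀ j : ℕ, ∀ ξ : ℝ, 1 ≤ ξ → |ρ j ξ| ≤ K * ξ)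
    (w : ℕ → EuclideanSpace ℝ (Fin N) → ℝ) (wlim : EuclideanSpace ℝ (Fin N) → ℝ)
    (hwint : ∀ j, IntegrableOn (w j) G) (hwnonneg : ∀ j, ∀ x ∈ G, 0 ≤ w j x)
    (hwlimint : IntegrableOn wlim G)
    (hweak : ∀ φ : EuclideanSpace ℝ (Fin N) → ℝ, Measurable φ → (∃ C, ∀ x, |φ x| ≤ C) →
      Tendsto (fun j => ∫ x in G, w j x * φ x) atTop (𝓝 (∫ x in G, wlim x * φ x))) :
    ∀ φ : EuclideanSpace ℝ (Fin N) → ℝ, Measurable φ → (∃ C, ∀ x, |φ x| ≤ C) →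
      Tendsto (fun j => ∫ x in G, ρ j (w j x) * φ x) atTop (𝓝 (∫ x in G, wlim x * φ x)) := by
  intro φ hφm hφbd
  obtain ⟨C, hC⟩ := hφbd
  set C' := max C 0 with hC'def
  have hC0 : ∀ x, |φ x| ≤ C' := fun x => (hC x).trans (le_max_left _ _)
  have hC'0 : (0:ℝ) ≤ C' := le_max_right _ _
  set μ' := (volume : Measure (EuclideanSpace ℝ (Fin N))).restrict G with hμ'
  haveI : IsFiniteMeasure μ' := ⟨by rw [hμ', Measure.restrict_apply_univ]; exact hGfin⟩
  have hwint' : ∀ j, Integrable (w j) μ' := hwint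
  have hnn : ∀ j, ∀ᵐ x ∂μ', 0 ≤ w j x := fun j =>
    (ae_restrict_iff' hGmeas).mpr (ae_of_all _ (hwnonneg j))
  -- indicator test functions give convergence of all set integrals
  have hkey : ∀ (u : EuclideanSpace ℝ (Fin N) → ℝ) (A : Set (EuclideanSpace ℝ (Fin N))),
      MeasurableSet A →
      ∫ x in G, u x * A.indicator (fun _ => (1:ℝ)) x = ∫ x in A, u x ∂μ' := by
    intro u A hA
    have h1 : ∫ x in G, u x * A.indicator (fun _ => (1:ℝ)) x = ∫ x in G, A.indicator u x :=
      integral_congr_ae (ae_of_all _ fun x => by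
        by_cases h : x ∈ A <;> simp [Set.indicator_apply, h])
    rw [h1, setIntegral_indicator hA, hμ', Measure.restrict_restrict hA, Set.inter_comm G A]
  have hconv' : ∀ A : Set (EuclideanSpace ℝ (Fin N)), MeasurableSet A →
      ∃ L, Tendsto (fun j => ∫ x in A, w j x ∂μ') atTop (𝓝 L) := by
    intro A hA
    refine ⟨∫ x in A, wlim x ∂μ', ?_⟩
    have hφA : Measurable (A.indicator (fun _ => (1:ℝ))) := measurable_const.indicator hA
    have hbdA : ∃ Cb, ∀ x, |A.indicator (fun _ => (1:ℝ)) x| ≤ Cb :=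
      ⟨1, fun x => by by_cases h : x ∈ A <;> simp [Set.indicator_apply, h]⟩
    have ht := hweak _ hφA hbdA
    have e1 : (fun j => ∫ x in G, w j x * A.indicator (fun _ => (1:ℝ)) x)
        = fun j => ∫ x in A, w j x ∂μ' := funext fun j => hkey (w j) A hA
    rw [e1, hkey wlim A hA] at ht
    exact ht
  -- integrability facts
  have haesm : ∀ j, AEStronglyMeasurable (fun x => ρ j (w j x)) μ' := by
    intro j
    have hcont : Continuous (fun ξ => ρ j (max ξ 0)) :=
      (hρcont j).comp_continuous (continuous_id.max continuous_const)
        (fun x => Set.mem_Ici.mpr (le_max_right x 0))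
    have h1 : AEStronglyMeasurable (fun x => ρ j (max (w j x) 0)) μ' :=
      hcont.comp_aestronglyMeasurable (hwint' j).aestronglyMeasurable
    refine h1.congr ?_
    filter_upwards [hnn j] with x hx
    rw [max_eq_left hx]
  have hρint : ∀ j, Integrable (fun x => ρ j (w j x)) μ' := by
    intro j
    obtain ⟨Cj, hCj⟩ := isCompact_Icc.exists_bound_of_continuousOn
      ((hρcont j).mono Set.Icc_subset_Ici_self)
    refine Integrable.mono' (g := fun x => Cj + K * w j x)
      ((integrable_const Cj).add ((hwint' j).const_mul K)) (haesm j) ?_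
    filter_upwards [hnn j] with x hx
    rcases le_or_gt (w j x) 1 with h | h
    · refine (hCj _ ⟨hx, h⟩).trans ?_
      nlinarith
    · have hb := hρK j (w j x) h.le
      rw [Real.norm_eq_abs]
      have hC0j : (0:ℝ) ≤ Cj := (norm_nonneg _).trans (hCj 0 ⟨le_rfl, zero_le_one⟩)
      nlinarith
  have hφsm : AEStronglyMeasurable φ μ' := hφm.aestronglyMeasurable
  have hρφint : ∀ j, Integrable (fun x => ρ j (w j x) * φ x) μ' := by
    intro j
    have := (hρint j).bdd_mul hφsm (c := C') (ae_of_all _ fun x => by rw [Real.norm_eq_abs]; exact hC0 x)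
    exact this.congr (ae_of_all _ fun x => mul_comm _ _)
  have hwφint : ∀ j, Integrable (fun x => w j x * φ x) μ' := by
    intro j
    have := (hwint' j).bdd_mul hφsm (c := C') (ae_of_all _ fun x => by rw [Real.norm_eq_abs]; exact hC0 x)
    exact this.congr (ae_of_all _ fun x => mul_comm _ _)
  have hintabs : ∀ j, Integrable (fun x => |ρ j (w j x) - w j x|) μ' :=
    fun j => ((hρint j).sub (hwint' j)).abs
  -- key identities
  have heq1 : ∀ j, ∫ x, ρ j (w j x) * φ x ∂μ' - ∫ x, w j x * φ x ∂μ'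
      = ∫ x, (ρ j (w j x) - w j x) * φ x ∂μ' := by
    intro j
    rw [← integral_sub (hρφint j) (hwφint j)]
    exact integral_congr_ae (ae_of_all _ fun x => (sub_mul _ _ _).symm)
  have hprodsub : ∀ j, Integrable (fun x => (ρ j (w j x) - w j x) * φ x) μ' := fun j =>
    ((hρφint j).sub (hwφint j)).congr (ae_of_all _ fun x => (sub_mul _ _ _).symm)
  have heq2 : ∀ j, |∫ x, (ρ j (w j x) - w j x) * φ x ∂μ'|
      ≤ C' * ∫ x, |ρ j (w j x) - w j x| ∂μ' := by
    intro j
    have h1 := norm_integral_le_integral_norm (μ := μ') (fun x => (ρ j (w j x) - w j x) * φ x)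
    simp only [Real.norm_eq_abs] at h1
    refine h1.trans ?_
    have h2 : ∫ x, |(ρ j (w j x) - w j x) * φ x| ∂μ'
        ≤ ∫ x, |ρ j (w j x) - w j x| * C' ∂μ' := by
      refine integral_mono_ae (hprodsub j).abs ((hintabs j).mul_const C') ?_
      refine ae_of_all _ fun x => ?_
      dsimp only
      rw [abs_mul]
      exact mul_le_mul_of_nonneg_left (hC0 x) (abs_nonneg _)
    refine h2.trans ?_
    rw [integral_mul_const]
    rw [mul_comm]
  -- the core estimate
  have hcore : ∀ ε₀ > (0:ℝ), ∃ J, ∀ j, J ≤ j →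
      ∫ x, |ρ j (w j x) - w j x| ∂μ' ≤ ε₀ / 2 := by
    intro ε₀ hε₀
    have h4K : (0:ℝ) < 4 * (K + 1) := by nlinarith
    set ε₁ := ε₀ / (4 * (K + 1)) with hε₁def
    have hε₁ : 0 < ε₁ := div_pos hε₀ h4K
    obtain ⟨δ, hδpos, hUI⟩ := my_vhs w hwint' hnn hconv' ε₁ hε₁
    set μG := (volume G).toReal with hμG
    have hμG0 : (0:ℝ) ≤ μG := ENNReal.toReal_nonneg
    have h4G : (0:ℝ) < 4 * (μG + 1) := by nlinarith
    set ε₂ := ε₀ / (4 * (μG + 1)) with hε₂def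
    have hε₂ : 0 < ε₂ := div_pos hε₀ h4G
    obtain ⟨L, hL⟩ := hconv' Set.univ MeasurableSet.univ
    obtain ⟨J₀, hJ₀⟩ := Metric.tendsto_atTop.mp hL 1 one_pos
    set B := max (L + 1) 1 with hBdef
    have hB1 : (1:ℝ) ≤ B := le_max_right _ _
    have hwB : ∀ j, J₀ ≤ j → ∫ x, w j x ∂μ' ≤ B := by
      intro j hj
      have h2 := hJ₀ j hj
      rw [Real.dist_eq] at h2
      rw [Measure.restrict_univ] at h2
      have h3 := (abs_lt.mp h2).2
      calc ∫ x, w j x ∂μ' ≤ L + 1 := by linarith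
        _ ≤ B := le_max_left _ _
    set M := max 1 (B / δ + 1) with hMdef
    have hM1 : (1:ℝ) ≤ M := le_max_left _ _
    have hM0 : (0:ℝ) < M := lt_of_lt_of_le one_pos hM1
    obtain ⟨J₁, hJ₁⟩ := hρconv M hM0 ε₂ hε₂
    refine ⟨max J₀ J₁, fun j hj => ?_⟩
    have hjJ₀ : J₀ ≤ j := le_trans (le_max_left _ _) hj
    have hjJ₁ : J₁ ≤ j := le_trans (le_max_right _ _) hj
    set vj := (hwint' j).aestronglyMeasurable.mk (w j) with hvjdef
    have hvsm : StronglyMeasurable vj := (hwint' j).aestronglyMeasurable.stronglyMeasurable_mk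
    have hveq : w j =ᵐ[μ'] vj := (hwint' j).aestronglyMeasurable.ae_eq_mk
    set Aj := {x | M < vj x} with hAjdef
    have hAjm : MeasurableSet Aj := measurableSet_lt measurable_const hvsm.measurable
    have hmark : μ' Aj < ENNReal.ofReal δ := by
      have hsub : Aj ⊆ {x | ENNReal.ofReal M ≤ ENNReal.ofReal (vj x)} :=
        fun x hx => ENNReal.ofReal_le_ofReal (le_of_lt hx)
      have haem : AEMeasurable (fun x => ENNReal.ofReal (vj x)) μ' :=
        (ENNReal.measurable_ofReal.comp hvsm.measurable).aemeasurable
      have hcheb := meas_ge_le_lintegral_div haem (ε := ENNReal.ofReal M)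
        (ENNReal.ofReal_pos.mpr hM0).ne' ENNReal.ofReal_ne_top
      have hlin : ∫⁻ x, ENNReal.ofReal (vj x) ∂μ' = ENNReal.ofReal (∫ x, w j x ∂μ') := by
        rw [ofReal_integral_eq_lintegral_ofReal (hwint' j) (hnn j)]
        exact (lintegral_congr_ae (by filter_upwards [hveq] with x hx; rw [hx])).symm
      calc μ' Aj ≤ μ' {x | ENNReal.ofReal M ≤ ENNReal.ofReal (vj x)} := measure_mono hsub
        _ ≤ (∫⁻ x, ENNReal.ofReal (vj x) ∂μ') / ENNReal.ofReal M := hcheb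
        _ ≤ ENNReal.ofReal B / ENNReal.ofReal M := by
            rw [hlin]
            exact ENNReal.div_le_div_right (ENNReal.ofReal_le_ofReal (hwB j hjJ₀)) _
        _ = ENNReal.ofReal (B / M) := (ENNReal.ofReal_div_of_pos hM0).symm
        _ < ENNReal.ofReal δ := by
            rw [ENNReal.ofReal_lt_ofReal_iff hδpos, div_lt_iff₀ hM0]
            have hM2 : B / δ + 1 ≤ M := le_max_right _ _
            have h5 := mul_le_mul_of_nonneg_left hM2 hδpos.le
            have heqq : δ * (B / δ + 1) = B + δ := by field_simp
            nlinarith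
    have hUIj := hUI j Aj hAjm hmark
    have hsplit := integral_add_compl hAjm (hintabs j)
    have hbd1 : ∫ x in Aj, |ρ j (w j x) - w j x| ∂μ' ≤ (K + 1) * ε₁ := by
      have hmono : ∫ x in Aj, |ρ j (w j x) - w j x| ∂μ'
          ≤ ∫ x in Aj, (K + 1) * w j x ∂μ' := by
        refine integral_mono_ae (hintabs j).restrict ((hwint' j).const_mul (K+1)).restrict ?_
        filter_upwards [ae_restrict_of_ae (hnn j), ae_restrict_of_ae hveq,
          ae_restrict_mem hAjm] with x hx1 hx2 hx3
        have hw1 : (1:ℝ) ≤ w j x := by rw [hx2]; exact le_of_lt (lt_of_le_of_lt hM1 hx3)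
        have hb := hρK j (w j x) hw1
        have htri : |ρ j (w j x) - w j x| ≤ |ρ j (w j x)| + |w j x| := by
          rw [sub_eq_add_neg]
          exact (abs_add_le _ _).trans (by rw [abs_neg])
        calc |ρ j (w j x) - w j x| ≤ |ρ j (w j x)| + |w j x| := htri
          _ ≤ K * w j x + w j x := add_le_add hb (le_of_eq (abs_of_nonneg hx1))
          _ = (K + 1) * w j x := by ring
      refine hmono.trans ?_
      rw [integral_const_mul]
      exact mul_le_mul_of_nonneg_left hUIj (by nlinarith)
    have hbd2 : ∫ x in Ajᶜ, |ρ j (w j x) - w j x| ∂μ' ≤ ε₂ * μG := by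
      have hmono : ∫ x in Ajᶜ, |ρ j (w j x) - w j x| ∂μ' ≤ ∫ _x in Ajᶜ, ε₂ ∂μ' := by
        refine integral_mono_ae (hintabs j).restrict (integrable_const _) ?_
        filter_upwards [ae_restrict_of_ae (hnn j), ae_restrict_of_ae hveq,
          ae_restrict_mem hAjm.compl] with x hx1 hx2 hx3
        have hle : w j x ≤ M := by rw [hx2]; exact not_lt.mp hx3
        exact hJ₁ j hjJ₁ (w j x) ⟨hx1, hle⟩
      refine hmono.trans ?_
      rw [setIntegral_const, smul_eq_mul]
      have hμle : (μ' Ajᶜ).toReal ≤ μG := by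
        rw [hμG]
        refine ENNReal.toReal_mono hGfin.ne ?_
        calc μ' Ajᶜ ≤ μ' Set.univ := measure_mono (Set.subset_univ _)
          _ = volume G := by rw [hμ', Measure.restrict_apply_univ]
      calc (μ' Ajᶜ).toReal * ε₂ ≤ μG * ε₂ := mul_le_mul_of_nonneg_right hμle hε₂.le
        _ = ε₂ * μG := mul_comm _ _
    have he1 : (K + 1) * ε₁ ≤ ε₀ / 4 := by
      rw [hε₁def]
      rw [mul_div_assoc']
      rw [div_le_div_iff₀ h4K (by norm_num : (0:ℝ) < 4)]
      nlinarith
    have he2 : ε₂ * μG ≤ ε₀ / 4 := by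
      rw [hε₂def, div_mul_eq_mul_div, div_le_div_iff₀ h4G (by norm_num : (0:ℝ) < 4)]
      nlinarith
    linarith
  -- final assembly
  rw [Metric.tendsto_atTop]
  intro ε hεpos
  obtain ⟨J₂, hJ₂⟩ := Metric.tendsto_atTop.mp (hweak φ hφm ⟨C, hC⟩) (ε/2) (half_pos hεpos)
  have hε₀ : (0:ℝ) < ε / (C' + 1) := by positivity
  obtain ⟨J₁, hJ₁⟩ := hcore (ε / (C' + 1)) hε₀
  refine ⟨max J₁ J₂, fun j hj => ?_⟩
  have hj1 : J₁ ≤ j := le_trans (le_max_left _ _) hj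
  have hj2 : J₂ ≤ j := le_trans (le_max_right _ _) hj
  have hE := hJ₁ j hj1
  have hd2 := hJ₂ j hj2
  have htri := dist_triangle (∫ x in G, ρ j (w j x) * φ x) (∫ x in G, w j x * φ x)
    (∫ x in G, wlim x * φ x)
  have hterm : dist (∫ x in G, ρ j (w j x) * φ x) (∫ x in G, w j x * φ x) ≤ ε / 2 := by
    rw [Real.dist_eq, heq1 j]
    refine (heq2 j).trans ?_
    have h5 := mul_le_mul_of_nonneg_left hE hC'0
    refine h5.trans ?_
    have h6 : (0:ℝ) < C' + 1 := by linarith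
    have hX0 : (0:ℝ) ≤ ε / (C' + 1) / 2 := le_of_lt (div_pos (div_pos hεpos h6) two_pos)
    have h8 : (ε / (C' + 1) / 2) * (C' + 1) = ε / 2 := by field_simp
    have h9 : C' * (ε / (C' + 1) / 2) ≤ (ε / (C' + 1) / 2) * (C' + 1) := by
      rw [mul_comm]
      exact mul_le_mul_of_nonneg_left (by linarith) hX0
    linarith [h8, h9]
  linarith
end

section
/- Let G ⊂ ℝ^N be a measurable set of finite measure and let (ρ_j) be continuous functions on [0,∞) with 0 ≤ ρ_j(ξ) and ρ_j(ξ) increasing in j with ρ_j(ξ) ↗ ξ pointwise as j → ∞ for every ξ ≥ 0. If (w_j) ⊂ L¹(G) are nonnegative with w_j ⇀ w weakly in L¹(G), then ρ_j(w_j) ⇀ w weakly in L¹(G). -/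
open MeasureTheory Filter Topology

/-- Dini-type lemma: monotone convergence `f j ξ ↗ ξ` of continuous functions is uniform
on `[0, M]`. -/
private lemma dini_aux (M ε : ℝ) (hε : 0 < ε) (f : ℕ → ℝ → ℝ)
    (hcont : ∀ j, Continuous (f j)) (hmono : ∀ ξ, Monotone (fun j => f j ξ))
    (hlim : ∀ ξ ∈ Set.Icc (0:ℝ) M, Tendsto (fun j => f j ξ) atTop (𝓝 ξ)) :
    ∃ J, ∀ j ≥ J, ∀ ξ ∈ Set.Icc (0:ℝ) M, ξ - f j ξ < ε := by
  have hchoice : ∀ i : Set.Icc (0:ℝ) M, ∃ j, (i : ℝ) - f j i < ε / 2 := by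
    intro i
    have h := (hlim i i.2).eventually_const_lt
      (show (i : ℝ) - ε / 2 < (i : ℝ) by linarith)
    obtain ⟨j, hj⟩ := h.exists
    exact ⟨j, by linarith⟩
  choose jf hjf using hchoice
  set U : Set.Icc (0:ℝ) M → Set ℝ := fun i => {η | η - f (jf i) η < ε} with hU
  have hUopen : ∀ i, IsOpen (U i) := by
    intro i
    have : U i = (fun η => η - f (jf i) η) ⁻¹' Set.Iio ε := rfl
    rw [this]
    exact isOpen_Iio.preimage (continuous_id.sub (hcont _))
  have hcover : Set.Icc (0:ℝ) M ⊆ ⋃ i, U i := by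
    intro ξ hξ
    exact Set.mem_iUnion.2 ⟨⟨ξ, hξ⟩, by simpa [U] using lt_of_lt_of_le (hjf ⟨ξ, hξ⟩) (by linarith)⟩
  obtain ⟨t, ht⟩ := isCompact_Icc.elim_finite_subcover U hUopen hcover
  refine ⟨t.sup jf, fun j hj ξ hξ => ?_⟩
  obtain ⟨i, hit, hξU⟩ := Set.mem_iUnion₂.1 (ht hξ)
  have h1 : jf i ≤ j := le_trans (Finset.le_sup hit) hj
  have h2 : f (jf i) ξ ≤ f j ξ := hmono ξ h1
  have h3 : ξ - f (jf i) ξ < ε := hξU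
  linarith

/-- Uniform integrability of a nonnegative sequence from setwise convergence of the integrals. -/
private lemma ui_aux {α : Type*} [MeasurableSpace α] (μ : Measure α) [IsFiniteMeasure μ]
    (v : ℕ → α → ℝ) (hvmeas : ∀ j, Measurable (v j)) (hvnn : ∀ j x, 0 ≤ v j x)
    (hvint : ∀ j, Integrable (v j) μ)
    (vl : α → ℝ) (hvlint : Integrable vl μ) (hvlnn : 0 ≤ᵐ[μ] vl)
    (hconv : ∀ E : Set α, MeasurableSet E →
      Tendsto (fun j => ∫ x in E, v j x ∂μ) atTop (𝓝 (∫ x in E, vl x ∂μ)))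
    (ε : ℝ) (hε : 0 < ε) :
    ∃ M : ℝ, 0 ≤ M ∧ ∀ j, ∫ x in {x | M < v j x}, v j x ∂μ ≤ ε := by
  -- uniform bound on the integrals
  obtain ⟨K0, hK0⟩ := (hconv Set.univ MeasurableSet.univ).bddAbove_range
  set K : ℝ := max K0 1 with hKdef
  have hK1 : (1:ℝ) ≤ K := le_max_right _ _
  have hK : ∀ j, ∫ x, v j x ∂μ ≤ K := by
    intro j
    have : ∫ x in Set.univ, v j x ∂μ ≤ K0 := hK0 (Set.mem_range_self j)
    rw [setIntegral_univ] at this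
    exact this.trans (le_max_left _ _)
  -- Markov inequality
  have markov : ∀ j, ∀ n : ℕ, 0 < n → (μ {x | (n:ℝ) < v j x}).toReal ≤ K / n := by
    intro j n hn
    have hn' : (0:ℝ) < n := by exact_mod_cast hn
    have h1 := mul_meas_ge_le_integral_of_nonneg (μ := μ)
      (ae_of_all _ (hvnn j)) (hvint j) (n:ℝ)
    have h2 : (μ {x | (n:ℝ) < v j x}).toReal ≤ (μ {x | (n:ℝ) ≤ v j x}).toReal :=
      ENNReal.toReal_mono (measure_ne_top _ _)
        (measure_mono (show {x | (n:ℝ) < v j x} ⊆ {x | (n:ℝ) ≤ v j x} by intro x hx; simp only [Set.mem_setOf_eq] at hx ⊢; exact le_of_lt hx))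
    rw [le_div_iff₀ hn']
    calc (μ {x | (n:ℝ) < v j x}).toReal * n
        = (n:ℝ) * (μ {x | (n:ℝ) < v j x}).toReal := by ring
      _ ≤ (n:ℝ) * (μ {x | (n:ℝ) ≤ v j x}).toReal := by
          exact mul_le_mul_of_nonneg_left h2 hn'.le
      _ ≤ ∫ x, v j x ∂μ := h1
      _ ≤ K := hK j
  -- tails tend to zero for each fixed j
  have htail0 : ∀ j, Tendsto (fun n : ℕ => ∫ x in {x | (n:ℝ) < v j x}, v j x ∂μ)
      atTop (𝓝 0) := by
    intro j
    refine (hvint j).tendsto_setIntegral_nhds_zero ?_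
    have hmeas : ∀ n : ℕ, NullMeasurableSet {x | (n:ℝ) < v j x} μ :=
      fun n => (measurableSet_lt measurable_const (hvmeas j)).nullMeasurableSet
    have hanti : Antitone (fun n : ℕ => {x | (n:ℝ) < v j x}) := by
      intro n m hnm x hx
      have hc : (n:ℝ) ≤ m := by exact_mod_cast hnm
      exact lt_of_le_of_lt hc hx
    have h := tendsto_measure_iInter_atTop hmeas hanti ⟨0, measure_ne_top _ _⟩
    have hempty : (⋂ n : ℕ, {x | (n:ℝ) < v j x}) = ∅ := by
      ext x
      simp only [Set.mem_iInter, Set.mem_setOf_eq, Set.mem_empty_iff_false, iff_false, not_forall,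
        not_lt]
      obtain ⟨n, hn⟩ := exists_nat_gt (v j x)
      exact ⟨n, hn.le⟩
    rwa [hempty, measure_empty] at h
  -- absolute continuity of the limit integral
  have habs : ∀ δ : ℝ, 0 < δ → ∃ η : ℝ, 0 < η ∧ ∀ E, MeasurableSet E →
      μ E ≤ ENNReal.ofReal η → ∫ x in E, vl x ∂μ ≤ δ := by
    intro δ hδ
    by_contra hc
    push_neg at hc
    choose E hEmeas hEμ hEint using fun n : ℕ => hc (1/(n+1)) (by positivity)
    have hub : Tendsto (fun n : ℕ => ENNReal.ofReal (1/(n+1))) atTop (𝓝 0) := by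
      have := ENNReal.tendsto_ofReal (tendsto_one_div_add_atTop_nhds_zero_nat)
      rwa [ENNReal.ofReal_zero] at this
    have hμ0 : Tendsto (μ ∘ E) atTop (𝓝 0) :=
      tendsto_of_tendsto_of_tendsto_of_le_of_le tendsto_const_nhds hub
        (fun n => zero_le) (fun n => hEμ n)
    have h0 := hvlint.tendsto_setIntegral_nhds_zero hμ0
    have : δ ≤ 0 := ge_of_tendsto h0 (Eventually.of_forall fun n => (hEint n).le)
    linarith
  -- main contradiction argument
  by_contra hcon
  push_neg at hcon
  have h : ∀ M : ℝ, 0 ≤ M → ∃ j, ε < ∫ x in {x | M < v j x}, v j x ∂μ := by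
    intro M hM
    obtain ⟨j, hj⟩ := hcon M hM
    exact ⟨j, hj⟩
  set δ : ℕ → ℝ := fun k => ε / 4 * (1/2)^k with hδdef
  have hδpos : ∀ k, 0 < δ k := fun k => by positivity
  choose η hηpos hη using fun k => habs (δ k) (hδpos k)
  -- choose the levels n k
  have hpick : ∀ k : ℕ, ∃ n : ℕ, 1 ≤ n ∧ K / η k ≤ (n:ℝ) ∧
      ∀ j ≤ k, ∫ x in {x | (n:ℝ) < v j x}, v j x ∂μ ≤ ε := by
    intro k
    have e1 : ∀ᶠ n : ℕ in atTop, 1 ≤ n := eventually_ge_atTop 1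
    have e2 : ∀ᶠ n : ℕ in atTop, K / η k ≤ (n:ℝ) :=
      tendsto_natCast_atTop_atTop.eventually_ge_atTop (K / η k)
    have e3 : ∀ᶠ n : ℕ in atTop, ∀ j ∈ Finset.range (k+1),
        ∫ x in {x | (n:ℝ) < v j x}, v j x ∂μ < ε :=
      (eventually_all_finset (Finset.range (k+1))).2
        (fun j _ => (htail0 j).eventually_lt_const hε)
    obtain ⟨n, h1, h2, h3⟩ := (e1.and (e2.and e3)).exists
    exact ⟨n, h1, h2, fun j hj => (h3 j (Finset.mem_range.2 (Nat.lt_succ_of_le hj))).le⟩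
  choose nk hnk1 hnkK hnktail using hpick
  choose jk hjk using fun k => h (nk k : ℝ) (Nat.cast_nonneg _)
  have hjk_gt : ∀ k, k < jk k := by
    intro k
    by_contra hc
    push_neg at hc
    exact absurd (hjk k) (not_lt.2 (hnktail k (jk k) hc))
  set A : ℕ → Set α := fun k => {x | ((nk k : ℕ):ℝ) < v (jk k) x} with hAdef
  have hAmeas : ∀ k, MeasurableSet (A k) :=
    fun k => measurableSet_lt measurable_const (hvmeas _)
  have hμA : ∀ k, μ (A k) ≤ ENNReal.ofReal (η k) := by
    intro k
    have h1 : (μ (A k)).toReal ≤ K / nk k := markov (jk k) (nk k) (hnk1 k)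
    have hnkpos : (0:ℝ) < nk k := by exact_mod_cast hnk1 k
    have h2 : K / nk k ≤ η k := by
      rw [div_le_iff₀ hnkpos]
      calc K = K / η k * η k := (div_mul_cancel₀ K (hηpos k).ne').symm
        _ ≤ (nk k : ℝ) * η k := by
            exact mul_le_mul_of_nonneg_right (hnkK k) (hηpos k).le
        _ = η k * nk k := by ring
    exact ENNReal.le_ofReal_iff_toReal_le (measure_ne_top _ _)
      ((hηpos k).le) |>.2 (h1.trans h2)
  have hAvl : ∀ k, ∫ x in A k, vl x ∂μ ≤ δ k := fun k => hη k _ (hAmeas k) (hμA k)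
  set B : Set α := ⋃ k, A k with hBdef
  have hBmeas : MeasurableSet B := MeasurableSet.iUnion hAmeas
  -- the limit integral over B is at most ε/2
  have claim1 : ∫ x in B, vl x ∂μ ≤ ε / 2 := by
    have hnnB : 0 ≤ᵐ[μ.restrict B] vl := ae_restrict_of_ae hvlnn
    have heq : ∫ x in B, vl x ∂μ =
        (∫⁻ x in B, ENNReal.ofReal (vl x) ∂μ).toReal := by
      rw [integral_eq_lintegral_of_nonneg_ae hnnB
        (hvlint.restrict.aestronglyMeasurable)]
    have h1 : (∫⁻ x in B, ENNReal.ofReal (vl x) ∂μ) ≤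
        ∑' k, ∫⁻ x in A k, ENNReal.ofReal (vl x) ∂μ :=
      lintegral_iUnion_le A _
    have h2 : ∀ k, ∫⁻ x in A k, ENNReal.ofReal (vl x) ∂μ ≤ ENNReal.ofReal (δ k) := by
      intro k
      have heq2 := ofReal_integral_eq_lintegral_ofReal (hvlint.restrict (s := A k))
        (ae_restrict_of_ae hvlnn)
      rw [← heq2]
      exact ENNReal.ofReal_le_ofReal (hAvl k)
    have h3 : (∑' k, ENNReal.ofReal (δ k)) = ENNReal.ofReal (ε / 2) := by
      rw [← ENNReal.ofReal_tsum_of_nonneg (fun k => (hδpos k).le)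
        (summable_geometric_two.mul_left (ε/4))]
      congr 1
      rw [tsum_mul_left, tsum_geometric_two]
      ring
    have h4 : (∫⁻ x in B, ENNReal.ofReal (vl x) ∂μ) ≤ ENNReal.ofReal (ε / 2) := by
      refine h1.trans ?_
      rw [← h3]
      exact ENNReal.tsum_le_tsum h2
    rw [heq]
    exact ENNReal.toReal_le_of_le_ofReal (by linarith) h4
  -- contradiction with setwise convergence on B
  have hBconv := hconv B hBmeas
  have hvlB : ∫ x in B, vl x ∂μ < ε := lt_of_le_of_lt claim1 (by linarith)
  obtain ⟨J, hJ⟩ := eventually_atTop.1 (hBconv.eventually_lt_const hvlB)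
  have h1 : ε < ∫ x in A J, v (jk J) x ∂μ := hjk J
  have h2 : ∫ x in A J, v (jk J) x ∂μ ≤ ∫ x in B, v (jk J) x ∂μ :=
    setIntegral_mono_set ((hvint _).integrableOn)
      (ae_restrict_of_ae (ae_of_all _ (hvnn _)))
      ((Set.subset_iUnion A J).eventuallyLE)
  have h3 : ∫ x in B, v (jk J) x ∂μ < ε := hJ (jk J) (hjk_gt J).le
  linarith

/-- Weak L¹ convergence of ρ_j(w_j) when 0 ≤ ρ_j(ξ) ↗ ξ monotonically in j
for every ξ ≥ 0, and w_j ⇀ w weakly in L¹(G), |G| < ∞. -/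
theorem rho_monotone_weak_L1_convergence
    (N : ℕ) (G : Set (EuclideanSpace ℝ (Fin N)))
    (hGmeas : MeasurableSet G) (hGfin : volume G < ⊤)
    (ρ : ℕ → ℝ → ℝ) (hρcont : ∀ j, ContinuousOn (ρ j) (Set.Ici 0))
    (hρ0 : ∀ j : ℕ, ∀ ξ : ℝ, 0 ≤ ξ → 0 ≤ ρ j ξ)
    (hρmono : ∀ ξ : ℝ, 0 ≤ ξ → Monotone (fun j => ρ j ξ))
    (hρle : ∀ j : ℕ, ∀ ξ : ℝ, 0 ≤ ξ → ρ j ξ ≤ ξ)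
    (hρlim : ∀ ξ : ℝ, 0 ≤ ξ → Tendsto (fun j => ρ j ξ) atTop (𝓝 ξ))
    (w : ℕ → EuclideanSpace ℝ (Fin N) → ℝ) (wlim : EuclideanSpace ℝ (Fin N) → ℝ)
    (hwint : ∀ j, IntegrableOn (w j) G) (hwnonneg : ∀ j, ∀ x ∈ G, 0 ≤ w j x)
    (hwlimint : IntegrableOn wlim G)
    (hweak : ∀ φ : EuclideanSpace ℝ (Fin N) → ℝ, Measurable φ → (∃ C, ∀ x, |φ x| ≤ C) →
      Tendsto (fun j => ∫ x in G, w j x * φ x) atTop (𝓝 (∫ x in G, wlim x * φ x))) :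
    ∀ φ : EuclideanSpace ℝ (Fin N) → ℝ, Measurable φ → (∃ C, ∀ x, |φ x| ≤ C) →
      Tendsto (fun j => ∫ x in G, ρ j (w j x) * φ x) atTop (𝓝 (∫ x in G, wlim x * φ x)) := by
  intro φ hφmeas hφbd
  obtain ⟨C, hC⟩ := hφbd
  haveI : IsFiniteMeasure (volume.restrict G) :=
    ⟨by rw [Measure.restrict_apply_univ]; exact hGfin⟩
  set μ : Measure (EuclideanSpace ℝ (Fin N)) := volume.restrict G with hμdef
  -- globally continuous modification of ρ
  set ρ' : ℕ → ℝ → ℝ := fun j ξ => ρ j (max ξ 0) with hρ'def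
  have hρ'cont : ∀ j, Continuous (ρ' j) := fun j =>
    (hρcont j).comp_continuous (continuous_id.max continuous_const) (fun x => Set.mem_Ici.2 (le_max_right _ _))
  have hρ'0 : ∀ j ξ, 0 ≤ ρ' j ξ := fun j ξ => hρ0 j _ (le_max_right _ _)
  have hρ'le : ∀ j ξ, ρ' j ξ ≤ max ξ 0 := fun j ξ => hρle j _ (le_max_right _ _)
  have hρ'mono : ∀ ξ, Monotone fun j => ρ' j ξ := fun ξ => hρmono _ (le_max_right _ _)
  -- measurable nonnegative versions of w j
  set v : ℕ → EuclideanSpace ℝ (Fin N) → ℝ :=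
    fun j x => max ((hwint j).aemeasurable.mk (w j) x) 0 with hvdef
  have hvmeas : ∀ j, Measurable (v j) :=
    fun j => ((hwint j).aemeasurable.measurable_mk).max measurable_const
  have hvnn : ∀ j x, 0 ≤ v j x := fun j x => le_max_right _ _
  have hvw : ∀ j, w j =ᵐ[μ] v j := by
    intro j
    have h1 := (hwint j).aemeasurable.ae_eq_mk
    have h2 : ∀ᵐ x ∂μ, 0 ≤ w j x := (ae_restrict_iff' hGmeas).2 (ae_of_all _ (hwnonneg j))
    filter_upwards [h1, h2] with x hx hx2
    simp only [hvdef]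
    rw [← hx, max_eq_left hx2]
  have hvint : ∀ j, Integrable (v j) μ := fun j => (hwint j).congr (hvw j)
  -- transfer of weak convergence to set integrals
  have hconv : ∀ E : Set (EuclideanSpace ℝ (Fin N)), MeasurableSet E →
      Tendsto (fun j => ∫ x in E, v j x ∂μ) atTop (𝓝 (∫ x in E, wlim x ∂μ)) := by
    intro E hE
    set ψ : EuclideanSpace ℝ (Fin N) → ℝ := E.indicator (fun _ => 1) with hψdef
    have hψmeas : Measurable ψ := measurable_const.indicator hE
    have hψbd : ∀ x, |ψ x| ≤ 1 := by
      intro x; by_cases hx : x ∈ E <;> simp [hψdef, Set.indicator_apply, hx]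
    have e1 : ∀ f : EuclideanSpace ℝ (Fin N) → ℝ,
        ∫ x in E, f x ∂μ = ∫ x in G, f x * ψ x := by
      intro f
      have h2 : (fun x => f x * ψ x) = E.indicator f := by
        funext x; by_cases hx : x ∈ E <;> simp [hψdef, Set.indicator_apply, hx]
      rw [hμdef, Measure.restrict_restrict hE, Set.inter_comm, h2, setIntegral_indicator hE]
    have hW := hweak ψ hψmeas ⟨1, hψbd⟩
    have h' : Tendsto (fun j => ∫ x in E, w j x ∂μ) atTop (𝓝 (∫ x in E, wlim x ∂μ)) := by
      simpa only [e1] using hW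
    have h'' : ∀ j, ∫ x in E, w j x ∂μ = ∫ x in E, v j x ∂μ := fun j =>
      integral_congr_ae (ae_restrict_of_ae (hvw j))
    simpa only [h''] using h'
  -- the weak limit is a.e. nonnegative
  have hwlnn : 0 ≤ᵐ[μ] wlim := by
    refine ae_nonneg_of_forall_setIntegral_nonneg hwlimint (fun s hs _ => ?_)
    refine ge_of_tendsto (hconv s hs) (Eventually.of_forall fun j => ?_)
    exact setIntegral_nonneg hs (fun x _ => hvnn j x)
  -- integrability facts
  have hρvint : ∀ j, Integrable (fun x => ρ' j (v j x)) μ := by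
    intro j
    refine Integrable.mono (hvint j)
      (((hρ'cont j).measurable.comp (hvmeas j)).aestronglyMeasurable)
      (Eventually.of_forall fun x => ?_)
    rw [Real.norm_eq_abs, Real.norm_eq_abs, abs_of_nonneg (hρ'0 j _),
      abs_of_nonneg (hvnn j x)]
    exact (hρ'le j _).trans_eq (max_eq_left (hvnn j x))
  have hgint : ∀ j, Integrable (fun x => v j x - ρ' j (v j x)) μ :=
    fun j => (hvint j).sub (hρvint j)
  have hgnn : ∀ j x, 0 ≤ v j x - ρ' j (v j x) := by
    intro j x
    have := (hρ'le j (v j x)).trans_eq (max_eq_left (hvnn j x))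
    linarith
  -- the total defect tends to zero
  have hT : Tendsto (fun j => ∫ x, (v j x - ρ' j (v j x)) ∂μ) atTop (𝓝 0) := by
    rw [Metric.tendsto_atTop]
    intro ε hε
    obtain ⟨M, hM0, hMtail⟩ := ui_aux μ v hvmeas hvnn hvint wlim hwlimint hwlnn hconv
      (ε/3) (by positivity)
    set c : ℝ := (μ Set.univ).toReal with hcdef
    have hc0 : 0 ≤ c := ENNReal.toReal_nonneg
    have hcne : c + 1 ≠ 0 := by positivity
    set ε' : ℝ := ε / (3 * (c + 1)) with hε'def
    have hε'pos : 0 < ε' := by positivity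
    obtain ⟨J, hJ⟩ := dini_aux M ε' hε'pos ρ' hρ'cont hρ'mono
      (fun ξ hξ => by
        have h := hρlim ξ hξ.1
        simp only [hρ'def]
        simpa [max_eq_left hξ.1] using h)
    refine ⟨J, fun j hj => ?_⟩
    have hTnn : 0 ≤ ∫ x, (v j x - ρ' j (v j x)) ∂μ :=
      integral_nonneg (fun x => hgnn j x)
    rw [Real.dist_eq, sub_zero, abs_of_nonneg hTnn]
    set S : Set (EuclideanSpace ℝ (Fin N)) := {x | M < v j x} with hSdef
    have hSmeas : MeasurableSet S := measurableSet_lt measurable_const (hvmeas j)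
    have hsplit := integral_add_compl hSmeas (hgint j)
    have b1 : ∫ x in S, (v j x - ρ' j (v j x)) ∂μ ≤ ε / 3 := by
      have h1 : ∫ x in S, (v j x - ρ' j (v j x)) ∂μ ≤ ∫ x in S, v j x ∂μ :=
        setIntegral_mono ((hgint j).integrableOn) ((hvint j).integrableOn)
          (fun x => by have := hρ'0 j (v j x); linarith)
      exact h1.trans (hMtail j)
    have b2 : ∫ x in Sᶜ, (v j x - ρ' j (v j x)) ∂μ ≤ ε / 3 := by
      have h1 : ∫ x in Sᶜ, (v j x - ρ' j (v j x)) ∂μ ≤ ∫ x in Sᶜ, ε' ∂μ := by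
        refine setIntegral_mono_on ((hgint j).integrableOn)
          (integrableOn_const (measure_ne_top _ _)) hSmeas.compl ?_
        intro x hx
        have hxle : v j x ≤ M := not_lt.1 hx
        have h := hJ j hj (v j x) ⟨hvnn j x, hxle⟩
        linarith
      have h2 : ∫ x in Sᶜ, ε' ∂μ = (μ Sᶜ).toReal * ε' := by
        rw [setIntegral_const]; simp [smul_eq_mul, Measure.real]
      have h3 : (μ Sᶜ).toReal ≤ c :=
        ENNReal.toReal_mono (measure_ne_top _ _) (measure_mono (Set.subset_univ _))
      calc ∫ x in Sᶜ, (v j x - ρ' j (v j x)) ∂μ ≤ (μ Sᶜ).toReal * ε' := h1.trans_eq h2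
        _ ≤ (c + 1) * ε' := by nlinarith
        _ = ε / 3 := by rw [hε'def]; field_simp
    calc ∫ x, (v j x - ρ' j (v j x)) ∂μ
        = ∫ x in S, (v j x - ρ' j (v j x)) ∂μ
          + ∫ x in Sᶜ, (v j x - ρ' j (v j x)) ∂μ := hsplit.symm
      _ ≤ ε/3 + ε/3 := add_le_add b1 b2
      _ < ε := by linarith
  -- assemble
  set C' : ℝ := |C| with hC'def
  have hC' : ∀ x, |φ x| ≤ C' := fun x => (hC x).trans (le_abs_self C)
  have hφae : AEStronglyMeasurable φ μ := hφmeas.aestronglyMeasurable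
  have hφbd' : ∃ c : ℝ, ∀ x, ‖φ x‖ ≤ c := ⟨C', fun x => by rw [Real.norm_eq_abs]; exact hC' x⟩
  have hvφint : ∀ j, Integrable (fun x => v j x * φ x) μ := fun j =>
    ((hvint j).bdd_mul hφae (ae_of_all _ hφbd'.choose_spec)).congr (ae_of_all _ fun x => mul_comm (φ x) (v j x))
  have hgφint : ∀ j, Integrable (fun x => (v j x - ρ' j (v j x)) * φ x) μ := fun j =>
    ((hgint j).bdd_mul hφae (ae_of_all _ hφbd'.choose_spec)).congr
      (ae_of_all _ fun x => mul_comm (φ x) (v j x - ρ' j (v j x)))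
  have key : ∀ j, ∫ x in G, ρ j (w j x) * φ x = ∫ x, ρ' j (v j x) * φ x ∂μ := by
    intro j
    refine integral_congr_ae ?_
    have h2 : ∀ᵐ x ∂μ, 0 ≤ w j x := (ae_restrict_iff' hGmeas).2 (ae_of_all _ (hwnonneg j))
    filter_upwards [hvw j, h2] with x hx hx2
    simp only [hρ'def]
    rw [← hx, max_eq_left hx2]
  have hsub : ∀ j, ∫ x, ρ' j (v j x) * φ x ∂μ
      = (∫ x, v j x * φ x ∂μ) - ∫ x, (v j x - ρ' j (v j x)) * φ x ∂μ := by
    intro j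
    rw [← integral_sub (hvφint j) (hgφint j)]
    refine integral_congr_ae (ae_of_all _ fun x => by ring)
  have hgφ0 : Tendsto (fun j => ∫ x, (v j x - ρ' j (v j x)) * φ x ∂μ) atTop (𝓝 0) := by
    refine squeeze_zero_norm (fun j => ?_) (by simpa using hT.const_mul C')
    calc ‖∫ x, (v j x - ρ' j (v j x)) * φ x ∂μ‖
        ≤ ∫ x, ‖(v j x - ρ' j (v j x)) * φ x‖ ∂μ := norm_integral_le_integral_norm _
      _ ≤ ∫ x, C' * (v j x - ρ' j (v j x)) ∂μ := by
          refine integral_mono (hgφint j).norm ((hgint j).const_mul C')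
            (fun x => ?_)
          rw [Real.norm_eq_abs, abs_mul, abs_of_nonneg (hgnn j x)]
          rw [mul_comm C' _]
          exact mul_le_mul_of_nonneg_left (hC' x) (hgnn j x)
      _ = C' * ∫ x, (v j x - ρ' j (v j x)) ∂μ := integral_const_mul C' _
  have hww : ∀ j, ∫ x in G, w j x * φ x = ∫ x, v j x * φ x ∂μ := fun j =>
    integral_congr_ae (by filter_upwards [hvw j] with x hx; rw [hx])
  have hwφ : Tendsto (fun j => ∫ x, v j x * φ x ∂μ) atTop (𝓝 (∫ x in G, wlim x * φ x)) := by
    have h := hweak φ hφmeas ⟨C, hC⟩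
    exact Tendsto.congr (fun j => hww j) h
  have hfin := hwφ.sub hgφ0
  rw [sub_zero] at hfin
  exact hfin.congr (fun j => ((hsub j).symm).trans (key j).symm)
end

section
/- Let κ > 1, c₅ > 0, c₆ > 0, and τ > 0. Define c₇ := max{((κ−1)c₅)^{−1/(κ−1)}, (c₆/c₅)^{1/κ}} and y̅(t) := c₇·(t − τ/2)^{−1/(κ−1)} + c₇ for t > τ/2. Then y̅'(t) + c₅·y̅(t)^κ ≥ c₆ for all t > τ/2. -/
/-- The constant c₇ = max{((κ−1)c₅)^{−1/(κ−1)}, (c₆/c₅)^{1/κ}}. -/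
noncomputable def cSeven (κ c₅ c₆ : ℝ) : ℝ :=
  max (((κ - 1) * c₅) ^ (-(1 / (κ - 1)))) ((c₆ / c₅) ^ (1 / κ))

/-- The supersolution y̅(t) = c₇ (t − τ/2)^{−1/(κ−1)} + c₇ on (τ/2, ∞). -/
noncomputable def ybar (κ c₅ c₆ τ t : ℝ) : ℝ :=
  cSeven κ c₅ c₆ * (t - τ / 2) ^ (-(1 / (κ - 1))) + cSeven κ c₅ c₆


private lemma rpow_add_rpow_le_rpow_real {a b p : ℝ} (ha : 0 ≤ a) (hb : 0 ≤ b)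
    (hp : 1 ≤ p) : a ^ p + b ^ p ≤ (a + b) ^ p := by
  have h := NNReal.add_rpow_le_rpow_add a.toNNReal b.toNNReal hp
  have h2 := NNReal.coe_le_coe.2 h
  push_cast [NNReal.coe_rpow] at h2
  rwa [Real.coe_toNNReal a ha, Real.coe_toNNReal b hb] at h2

/-- y̅'(t) + c₅ y̅(t)^κ ≥ c₆ for all t > τ/2. -/
theorem ybar_supersolution (κ c₅ c₆ τ : ℝ) (hκ : 1 < κ) (hc₅ : 0 < c₅) (hc₆ : 0 < c₆)
    (hτ : 0 < τ) :
    ∀ t > τ / 2, deriv (fun s => ybar κ c₅ c₆ τ s) t + c₅ * (ybar κ c₅ c₆ τ t) ^ κ ≥ c₆ := by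
  intro t ht
  have hκ1 : (0:ℝ) < κ - 1 := by linarith
  set α : ℝ := 1 / (κ - 1) with hαdef
  have hαpos : 0 < α := by positivity
  set x : ℝ := t - τ / 2 with hxdef
  have hxpos : 0 < x := by simp only [hxdef]; linarith
  set c : ℝ := cSeven κ c₅ c₆ with hcdef
  have hcpos : 0 < c :=
    lt_of_lt_of_le (Real.rpow_pos_of_pos (div_pos hc₆ hc₅) _) (le_max_right _ _)
  have hc1 : ((κ - 1) * c₅) ^ (-α) ≤ c := le_max_left _ _
  have hc2 : (c₆ / c₅) ^ (1 / κ) ≤ c := le_max_right _ _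
  -- derivative
  have hD : HasDerivAt (fun s => ybar κ c₅ c₆ τ s) (c * (-α * x ^ (-α - 1))) t := by
    have h1 : HasDerivAt (fun s : ℝ => s - τ / 2) 1 t := (hasDerivAt_id t).sub_const _
    have h2 : HasDerivAt (fun s : ℝ => (s - τ / 2) ^ (-α)) (-α * x ^ (-α - 1) * 1) t := by
      have := (Real.hasDerivAt_rpow_const (p := -α) (Or.inl hxpos.ne')).comp t h1
      exact this
    have h3 := (h2.const_mul c).add_const c
    simpa [ybar, hcdef, hαdef, mul_comm, mul_assoc] using h3
  rw [hD.deriv]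
  have hybar : ybar κ c₅ c₆ τ t = c * x ^ (-α) + c := by
    simp [ybar, hcdef, hαdef, hxdef]
  rw [hybar]
  -- key power inequality: (a+b)^κ ≥ a^κ + b^κ
  have hne : κ - 1 ≠ 0 := hκ1.ne'
  have hsum : (c * x ^ (-α)) ^ κ + c ^ κ ≤ (c * x ^ (-α) + c) ^ κ :=
    rpow_add_rpow_le_rpow_real (by positivity) hcpos.le hκ.le
  have hακ : -α * κ = -α - 1 := by
    have h1 : α * (κ - 1) = 1 := by rw [hαdef]; field_simp
    nlinarith
  have hpow : (c * x ^ (-α)) ^ κ = c ^ κ * x ^ (-α - 1) := by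
    rw [Real.mul_rpow hcpos.le (by positivity), ← Real.rpow_mul hxpos.le, hακ]
  -- c₅ c^κ ≥ c₆
  have hA : c₆ ≤ c₅ * c ^ κ := by
    have h := Real.rpow_le_rpow (by positivity) hc2 (by positivity : (0:ℝ) ≤ κ)
    rw [← Real.rpow_mul (by positivity), one_div, inv_mul_cancel₀ (by linarith : κ ≠ 0),
      Real.rpow_one] at h
    calc c₆ = c₅ * (c₆ / c₅) := by field_simp
    _ ≤ c₅ * c ^ κ := by nlinarith
  -- c₅ c^(κ-1) ≥ α
  have hB : α ≤ c₅ * c ^ (κ - 1) := by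
    have h := Real.rpow_le_rpow (by positivity) hc1 hκ1.le
    rw [← Real.rpow_mul (by positivity)] at h
    have hexp : -α * (κ - 1) = -1 := by rw [hαdef]; field_simp
    rw [hexp, Real.rpow_neg_one] at h
    have hinv : ((κ - 1) * c₅)⁻¹ = α / c₅ := by
      rw [hαdef]; field_simp
    rw [hinv] at h
    calc α = c₅ * (α / c₅) := by field_simp
    _ ≤ c₅ * c ^ (κ - 1) := by nlinarith
  have hsplit : c ^ κ = c ^ (κ - 1) * c := by
    rw [← Real.rpow_add_one hcpos.ne' (κ - 1)]; norm_num
  have hxp : 0 < x ^ (-α - 1) := Real.rpow_pos_of_pos hxpos _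
  have hmain : 0 ≤ c * (-α * x ^ (-α - 1)) + c₅ * (c ^ κ * x ^ (-α - 1)) := by
    have : c * α ≤ c₅ * c ^ κ := by rw [hsplit]; nlinarith
    nlinarith
  have : c₅ * ((c * x ^ (-α)) ^ κ + c ^ κ) ≤ c₅ * (c * x ^ (-α) + c) ^ κ := by
    nlinarith
  rw [hpow] at this
  nlinarith
end
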